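/- arXiv:2010.04244 — 6 statements merged into one kernel-verified Lean document; each statement's English description precedes it below -/
import Mathlib

section
/- Let δ' and ε' be real numbers with 0 < δ' ≤ 1/2 and 0 ≤ ε' ≤ 1 - 2δ'. Then δ' * log(δ' / (δ' + ε')) + (1 - δ') * log((1 - δ') / (1 - δ' - ε')) ≤ 2 * ε'^2 / δ'. -/
theorem bernoulli_kl_bound (δ' ε' : ℝ) (hδ0 : 0 < δ') (hδ : δ' ≤ 1 / 2)
    (hε0 : 0 ≤ ε') (hε : ε' ≤ 1 - 2 * δ') :
    δ' * Real.log (δ' / (δ' + ε')) + (1 - δ') * Real.log ((1 - δ') / (1 - δ' - ε'))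
      ≤ 2 * ε' ^ 2 / δ' := by
  have hb : 0 < δ' + ε' := by linarith
  have hc : 0 < 1 - δ' - ε' := by linarith
  have h1d : 0 < 1 - δ' := by linarith
  have l1 : Real.log (δ' / (δ' + ε')) ≤ δ' / (δ' + ε') - 1 :=
    Real.log_le_sub_one_of_pos (by positivity)
  have l2 : Real.log ((1 - δ') / (1 - δ' - ε')) ≤ (1 - δ') / (1 - δ' - ε') - 1 :=
    Real.log_le_sub_one_of_pos (by positivity)
  have t1 : δ' * Real.log (δ' / (δ' + ε')) ≤ δ' * (δ' / (δ' + ε') - 1) :=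
    mul_le_mul_of_nonneg_left l1 hδ0.le
  have t2 : (1 - δ') * Real.log ((1 - δ') / (1 - δ' - ε')) ≤
      (1 - δ') * ((1 - δ') / (1 - δ' - ε') - 1) :=
    mul_le_mul_of_nonneg_left l2 h1d.le
  have key : δ' * (δ' / (δ' + ε') - 1) + (1 - δ') * ((1 - δ') / (1 - δ' - ε') - 1)
      ≤ 2 * ε' ^ 2 / δ' := by
    rw [div_sub_one hb.ne', div_sub_one hc.ne', mul_div_assoc', mul_div_assoc',
      div_add_div _ _ hb.ne' hc.ne',
      div_le_div_iff₀ (by positivity) hδ0]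
    nlinarith [mul_nonneg hε0 (by linarith : (0:ℝ) ≤ 1 - 2 * δ' - ε'),
      mul_nonneg hδ0.le (by linarith : (0:ℝ) ≤ 1 - 2 * δ'), sq_nonneg ε',
      mul_nonneg (mul_nonneg hε0 hε0) (mul_nonneg hε0 (by linarith : (0:ℝ) ≤ 1 - 2 * δ' - ε'))]
  linarith
end

section
/- Let d ≥ 4 be an integer and H, T > 0 be real numbers such that Δ := (d - 3) * sqrt(H / T) satisfies Δ ≤ 1/8. Then for all real numbers x, y with |x| ≤ Δ, |y| ≤ Δ, and |x - y| ≤ 2Δ / (d - 3), the Kullback–Leibler divergence between the Bernoulli distributions with parameters 1/4 + x and 1/4 + y satisfies (1/4 + x) * log((1/4 + x)/(1/4 + y)) + (3/4 - x) * log((3/4 - x)/(3/4 - y)) ≤ 64 * H / T. -/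
set_option maxHeartbeats 1000000


theorem kl_bound_hard_instance (d : ℕ) (hd : 4 ≤ d) (H T : ℝ) (hH : 0 < H) (hT : 0 < T)
    (Δ : ℝ) (hΔ : Δ = ((d : ℝ) - 3) * Real.sqrt (H / T)) (hΔle : Δ ≤ 1 / 8) :
    ∀ x y : ℝ, |x| ≤ Δ → |y| ≤ Δ → |x - y| ≤ 2 * Δ / ((d : ℝ) - 3) →
      (1 / 4 + x) * Real.log ((1 / 4 + x) / (1 / 4 + y))
        + (3 / 4 - x) * Real.log ((3 / 4 - x) / (3 / 4 - y)) ≤ 64 * H / T := by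
  intro x y hx hy hxy
  have hd3 : (1:ℝ) ≤ (d:ℝ) - 3 := by
    have : (4:ℝ) ≤ (d:ℝ) := by exact_mod_cast hd
    linarith
  have hsnn : 0 ≤ Real.sqrt (H / T) := Real.sqrt_nonneg _
  have hs : Real.sqrt (H / T) ^ 2 = H / T := Real.sq_sqrt (by positivity)
  have hxyb : |x - y| ≤ 2 * Real.sqrt (H / T) := by
    rw [hΔ] at hxy
    have h' : 2 * (((d:ℝ) - 3) * Real.sqrt (H / T)) / ((d:ℝ) - 3)
        = 2 * Real.sqrt (H / T) := by
      field_simp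
    linarith [hxy, h'.symm.le]
  have hxy2 : (x - y) ^ 2 ≤ 4 * (H / T) := by
    nlinarith [sq_abs (x - y), abs_nonneg (x - y)]
  have hx1 : |x| ≤ 1 / 8 := hx.trans hΔle
  have hy1 : |y| ≤ 1 / 8 := hy.trans hΔle
  rw [abs_le] at hx1 hy1
  have hp : (0:ℝ) < 1 / 4 + x := by linarith [hx1.1]
  have hq : (0:ℝ) < 1 / 4 + y := by linarith [hy1.1]
  have hp' : (0:ℝ) < 3 / 4 - x := by linarith [hx1.2]
  have hq' : (0:ℝ) < 3 / 4 - y := by linarith [hy1.2]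
  have l1 : Real.log ((1 / 4 + x) / (1 / 4 + y)) ≤ (1 / 4 + x) / (1 / 4 + y) - 1 :=
    Real.log_le_sub_one_of_pos (by positivity)
  have l2 : Real.log ((3 / 4 - x) / (3 / 4 - y)) ≤ (3 / 4 - x) / (3 / 4 - y) - 1 :=
    Real.log_le_sub_one_of_pos (by positivity)
  have h1 : (1 / 4 + x) * Real.log ((1 / 4 + x) / (1 / 4 + y))
      ≤ (1 / 4 + x) * ((1 / 4 + x) / (1 / 4 + y) - 1) :=
    mul_le_mul_of_nonneg_left l1 hp.le
  have h2 : (3 / 4 - x) * Real.log ((3 / 4 - x) / (3 / 4 - y))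
      ≤ (3 / 4 - x) * ((3 / 4 - x) / (3 / 4 - y) - 1) :=
    mul_le_mul_of_nonneg_left l2 hp'.le
  have A : (1 / 4 + x) / (1 / 4 + y) - 1 = (x - y) / (1 / 4 + y) := by
    rw [div_sub_one hq.ne']; ring_nf
  have B : (3 / 4 - x) / (3 / 4 - y) - 1 = (y - x) / (3 / 4 - y) := by
    rw [div_sub_one hq'.ne']; ring_nf
  have heq : (1 / 4 + x) * ((1 / 4 + x) / (1 / 4 + y) - 1)
      + (3 / 4 - x) * ((3 / 4 - x) / (3 / 4 - y) - 1)
      = (x - y) ^ 2 / ((1 / 4 + y) * (3 / 4 - y)) := by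
    rw [A, B, mul_div_assoc', mul_div_assoc', div_add_div _ _ hq.ne' hq'.ne',
      div_eq_div_iff (by positivity) (by positivity)]
    ring
  have hden : (7:ℝ) / 64 ≤ (1 / 4 + y) * (3 / 4 - y) := by
    nlinarith [hy1.1, hy1.2, mul_nonneg (by linarith [hy1.1] : (0:ℝ) ≤ y + 1/8)
      (by linarith [hy1.2] : (0:ℝ) ≤ 5/8 - y)]
  have hfin : (x - y) ^ 2 / ((1 / 4 + y) * (3 / 4 - y)) ≤ 64 * H / T := by
    have h3 : (x - y) ^ 2 / ((1 / 4 + y) * (3 / 4 - y)) ≤ (x - y) ^ 2 / (7 / 64) :=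
      div_le_div_of_nonneg_left (sq_nonneg _) (by norm_num) hden
    have h4 : (x - y) ^ 2 / (7 / 64) ≤ 64 * H / T := by
      have hHT : 0 < H / T := div_pos hH hT
      have he : (x - y) ^ 2 / (7 / 64) = (64 / 7) * (x - y) ^ 2 := by ring
      have step : (64 / 7 : ℝ) * (x - y) ^ 2 ≤ (64 / 7) * (4 * (H / T)) :=
        mul_le_mul_of_nonneg_left hxy2 (by norm_num)
      have he2 : 64 * H / T = 64 * (H / T) := by ring
      rw [he, he2]
      linarith
    linarith
  linarith
end

section
/- Let P and Q be probability measures on a measurable space and let E be a measurable set. Then P(E) + Q(Eᶜ) ≥ (1/2) * exp(-KL(P ‖ Q)), where KL(P ‖ Q) denotes the Kullback–Leibler divergence of P with respect to Q (with the convention that the right-hand side is 0 when KL(P ‖ Q) = ∞). -/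
/-!
Write `f = dP/dQ`. Splitting `Ω` into `E` and `Eᶜ` gives `∫ min(f, 1) dQ ≤ P(E) + Q(Eᶜ)`, while
`∫ max(f, 1) dQ ≤ 2`. Since `√f = √(min(f, 1) · max(f, 1))`, Cauchy–Schwarz yields
`(∫ √f dQ)² ≤ 2 (P(E) + Q(Eᶜ))`. Finally `∫ √f dQ ≥ ∫ exp(-½ log f) dP ≥ exp(-½ KL(P ‖ Q))`
by Jensen's inequality for `exp`.
-/

open MeasureTheory
open scoped Classical

/-- The Kullback–Leibler divergence of `P` with respect to `Q`, valued in `ℝ≥0∞`: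
it equals `∫ log (dP/dQ) dP` when `P ≪ Q` (and this integral is well defined),
and `∞` otherwise. -/
noncomputable def klDiv {Ω : Type*} [MeasurableSpace Ω] (P Q : Measure Ω) : ENNReal :=
  if P ≪ Q ∧ Integrable (llr P Q) P then ENNReal.ofReal (∫ x, llr P Q x ∂P) else ⊤

open Real
open scoped ENNReal

section

variable {Ω : Type*} [MeasurableSpace Ω]

lemma ofReal_exp_integral_le_lintegral_ofReal_exp {μ : Measure Ω} [IsProbabilityMeasure μ]
    {g : Ω → ℝ} (hg : Integrable g μ) :
    ENNReal.ofReal (exp (∫ x, g x ∂μ)) ≤ ∫⁻ x, ENNReal.ofReal (exp (g x)) ∂μ := by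
  by_cases h_top : ∫⁻ x, ENNReal.ofReal (exp (g x)) ∂μ = ∞
  · simp [h_top]
  have h_exp_nonneg : 0 ≤ᵐ[μ] fun x ↦ exp (g x) := ae_of_all _ fun x ↦ (exp_pos _).le
  have h_int : Integrable (fun x ↦ exp (g x)) μ :=
    ⟨continuous_exp.comp_aestronglyMeasurable hg.1,
      (hasFiniteIntegral_iff_ofReal h_exp_nonneg).2 (lt_top_iff_ne_top.2 h_top)⟩
  rw [← ofReal_integral_eq_lintegral_ofReal h_int h_exp_nonneg]
  exact ENNReal.ofReal_le_ofReal <| convexOn_exp.map_integral_le continuousOn_exp isClosed_univ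
    (ae_of_all _ fun _ ↦ Set.mem_univ _) hg h_int

lemma ofReal_exp_mul_llr_ae_eq {μ ν : Measure Ω} [SigmaFinite μ] [SigmaFinite ν] (hμν : μ ≪ ν)
    (r : ℝ) : ∀ᵐ x ∂μ, ENNReal.ofReal (exp (r * llr μ ν x)) = μ.rnDeriv ν x ^ r := by
  filter_upwards [Measure.rnDeriv_pos hμν, hμν.ae_le (Measure.rnDeriv_lt_top μ ν)]
    with x h_pos h_lt_top
  have h_pos' : 0 < (μ.rnDeriv ν x).toReal := ENNReal.toReal_pos h_pos.ne' h_lt_top.ne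
  rw [llr_def, mul_comm, ← rpow_def_of_pos h_pos', ← ENNReal.ofReal_rpow_of_pos h_pos',
    ENNReal.ofReal_toReal h_lt_top.ne]

lemma lintegral_rnDeriv_rpow_neg_half_le {μ ν : Measure Ω} [μ.HaveLebesgueDecomposition ν]
    (hμν : μ ≪ ν) :
    ∫⁻ x, μ.rnDeriv ν x ^ (-(1 / 2) : ℝ) ∂μ ≤ ∫⁻ x, μ.rnDeriv ν x ^ (1 / 2 : ℝ) ∂ν := by
  rw [← lintegral_rnDeriv_mul hμν ((Measure.measurable_rnDeriv μ ν).pow_const _).aemeasurable]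
  refine lintegral_mono fun x ↦ ?_
  generalize μ.rnDeriv ν x = a
  rcases eq_or_ne a ∞ with rfl | h_top
  · simp
  calc a * a ^ (-(1 / 2) : ℝ) = a ^ (1 + -(1 / 2) : ℝ) := by
        rw [ENNReal.rpow_add_of_add_pos h_top _ _ (by norm_num), ENNReal.rpow_one]
    _ ≤ a ^ (1 / 2 : ℝ) := by norm_num

lemma sq_lintegral_rpow_half_le_lintegral_min_mul_lintegral_max {μ : Measure Ω}
    {f : Ω → ℝ≥0∞} (hf : AEMeasurable f μ) :
    (∫⁻ x, f x ^ (1 / 2 : ℝ) ∂μ) ^ 2 ≤ (∫⁻ x, min (f x) 1 ∂μ) * ∫⁻ x, max (f x) 1 ∂μ := by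
  have h_split : ∀ x, f x ^ (1 / 2 : ℝ) = min (f x) 1 ^ (1 / 2 : ℝ) * max (f x) 1 ^ (1 / 2 : ℝ) :=
    fun x ↦ by rw [← ENNReal.mul_rpow_of_nonneg _ _ (by norm_num), min_mul_max, mul_one]
  have h_cs := ENNReal.lintegral_mul_norm_pow_le (hf.min (aemeasurable_const (b := 1)))
    (hf.max (aemeasurable_const (b := 1)))
    (p := 1 / 2) (q := 1 / 2) (by norm_num) (by norm_num) (by norm_num)
  simp_rw [← h_split] at h_cs
  calc (∫⁻ x, f x ^ (1 / 2 : ℝ) ∂μ) ^ 2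
      ≤ ((∫⁻ x, min (f x) 1 ∂μ) ^ (1 / 2 : ℝ) * (∫⁻ x, max (f x) 1 ∂μ) ^ (1 / 2 : ℝ)) ^ 2 :=
        pow_le_pow_left₀ zero_le h_cs 2
    _ = (∫⁻ x, min (f x) 1 ∂μ) * ∫⁻ x, max (f x) 1 ∂μ := by
        rw [mul_pow, ← ENNReal.rpow_mul_natCast, ← ENNReal.rpow_mul_natCast]
        norm_num

lemma lintegral_min_rnDeriv_one_le (μ ν : Measure Ω) {E : Set Ω} (hE : MeasurableSet E) :
    ∫⁻ x, min (μ.rnDeriv ν x) 1 ∂ν ≤ μ E + ν Eᶜ := by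
  rw [← lintegral_add_compl _ hE]
  gcongr
  · exact (setLIntegral_mono' hE fun x _ ↦ min_le_left _ _).trans
      (Measure.setLIntegral_rnDeriv_le E)
  · exact (setLIntegral_mono' hE.compl fun x _ ↦ min_le_right _ _).trans_eq (setLIntegral_one _)

lemma lintegral_max_rnDeriv_one_le (μ ν : Measure Ω) :
    ∫⁻ x, max (μ.rnDeriv ν x) 1 ∂ν ≤ μ Set.univ + ν Set.univ := by
  calc ∫⁻ x, max (μ.rnDeriv ν x) 1 ∂ν ≤ ∫⁻ x, (μ.rnDeriv ν x + 1) ∂ν :=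
        lintegral_mono fun x ↦ max_le le_self_add le_add_self
    _ = ∫⁻ x, μ.rnDeriv ν x ∂ν + ν Set.univ := by
        rw [lintegral_add_left (Measure.measurable_rnDeriv μ ν), lintegral_one]
    _ ≤ μ Set.univ + ν Set.univ := by gcongr; exact Measure.lintegral_rnDeriv_le

lemma ofReal_exp_neg_half_integral_llr_le {P Q : Measure Ω} [IsProbabilityMeasure P]
    [SigmaFinite Q] (hPQ : P ≪ Q) (h_int : Integrable (llr P Q) P) :
    ENNReal.ofReal (exp (-(∫ x, llr P Q x ∂P) / 2)) ≤ ∫⁻ x, P.rnDeriv Q x ^ (1 / 2 : ℝ) ∂Q :=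
  calc ENNReal.ofReal (exp (-(∫ x, llr P Q x ∂P) / 2))
      = ENNReal.ofReal (exp (∫ x, -(1 / 2) * llr P Q x ∂P)) := by
        rw [integral_const_mul]; ring_nf
    _ ≤ ∫⁻ x, ENNReal.ofReal (exp (-(1 / 2) * llr P Q x)) ∂P :=
        ofReal_exp_integral_le_lintegral_ofReal_exp (h_int.const_mul _)
    _ = ∫⁻ x, P.rnDeriv Q x ^ (-(1 / 2) : ℝ) ∂P :=
        lintegral_congr_ae (ofReal_exp_mul_llr_ae_eq hPQ _)
    _ ≤ ∫⁻ x, P.rnDeriv Q x ^ (1 / 2 : ℝ) ∂Q := lintegral_rnDeriv_rpow_neg_half_le hPQ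

lemma ofReal_exp_neg_integral_llr_le {P Q : Measure Ω} [IsProbabilityMeasure P]
    [IsProbabilityMeasure Q] (hPQ : P ≪ Q) (h_int : Integrable (llr P Q) P) {E : Set Ω}
    (hE : MeasurableSet E) :
    ENNReal.ofReal (exp (-∫ x, llr P Q x ∂P)) ≤ 2 * (P E + Q Eᶜ) :=
  calc ENNReal.ofReal (exp (-∫ x, llr P Q x ∂P))
      = ENNReal.ofReal (exp (-(∫ x, llr P Q x ∂P) / 2)) ^ 2 := by
        rw [← ENNReal.ofReal_pow (exp_pos _).le, ← exp_nat_mul]; ring_nf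
    _ ≤ (∫⁻ x, P.rnDeriv Q x ^ (1 / 2 : ℝ) ∂Q) ^ 2 := by
        gcongr; exact ofReal_exp_neg_half_integral_llr_le hPQ h_int
    _ ≤ (∫⁻ x, min (P.rnDeriv Q x) 1 ∂Q) * ∫⁻ x, max (P.rnDeriv Q x) 1 ∂Q :=
        sq_lintegral_rpow_half_le_lintegral_min_mul_lintegral_max
          (Measure.measurable_rnDeriv P Q).aemeasurable
    _ ≤ (P E + Q Eᶜ) * (P Set.univ + Q Set.univ) :=
        mul_le_mul' (lintegral_min_rnDeriv_one_le P Q hE) (lintegral_max_rnDeriv_one_le P Q)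
    _ = 2 * (P E + Q Eᶜ) := by simp [one_add_one_eq_two, mul_comm]

end

/-- The Bretagnolle–Huber inequality:
`P(E) + Q(Eᶜ) ≥ (1/2) * exp (- KL(P‖Q))`, with the convention that the right-hand
side is `0` when `KL(P‖Q) = ∞`. -/
theorem bretagnolle_huber {Ω : Type*} [MeasurableSpace Ω] (P Q : Measure Ω)
    [IsProbabilityMeasure P] [IsProbabilityMeasure Q] (E : Set Ω) (hE : MeasurableSet E) :
    (if klDiv P Q = ⊤ then (0 : ℝ) else (1 / 2) * Real.exp (-(klDiv P Q).toReal))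
      ≤ (P E).toReal + (Q Eᶜ).toReal := by
  split_ifs with h_top
  · positivity
  obtain ⟨hPQ, h_int⟩ : P ≪ Q ∧ Integrable (llr P Q) P := by
    by_contra h
    exact h_top (if_neg h)
  have h_bound := ENNReal.toReal_mono (by finiteness) (ofReal_exp_neg_integral_llr_le hPQ h_int hE)
  rw [ENNReal.toReal_ofReal (exp_pos _).le, ENNReal.toReal_mul, ENNReal.toReal_ofNat,
    ENNReal.toReal_add (measure_ne_top _ _) (measure_ne_top _ _)] at h_bound
  have h_kl : exp (-(klDiv P Q).toReal) ≤ exp (-∫ x, llr P Q x ∂P) := by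
    rw [klDiv, if_pos ⟨hPQ, h_int⟩, ENNReal.toReal_ofReal', exp_le_exp, neg_le_neg_iff]
    exact le_max_left _ _
  linarith
end

section
/- Let φ_1, …, φ_t be vectors in ℝ^d and let Λ_t = I + Σ_{i=1}^t φ_i φ_iᵀ, which is a positive definite (hence invertible) d × d matrix. Then Σ_{i=1}^t φ_iᵀ (Λ_t)⁻¹ φ_i ≤ d. -/
/-! Summing the rank-one terms turns the left side into `tr (Λ⁻¹ (Λ - I)) = d - tr Λ⁻¹`,
and `tr Λ⁻¹ ≥ 0` because the inverse of a positive definite matrix is positive definite. -/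

open Matrix

theorem Matrix.dotProduct_mulVec_eq_trace_mul_vecMulVec {n R : Type*} [Fintype n]
    [CommSemiring R] (M : Matrix n n R) (v w : n → R) :
    v ⬝ᵥ (M *ᵥ w) = (M * vecMulVec w v).trace := by
  rw [mul_vecMulVec, trace_vecMulVec, dotProduct_comm]

theorem Matrix.PosDef.trace_inv_mul_sub_one_le_card {n K : Type*} [Fintype n] [DecidableEq n]
    [Field K] [PartialOrder K] [StarRing K] [StarOrderedRing K] {Λ : Matrix n n K}
    (hΛ : Λ.PosDef) : (Λ⁻¹ * (Λ - 1)).trace ≤ Fintype.card n := by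
  rw [Matrix.mul_sub, mul_one, nonsing_inv_mul _ ((isUnit_iff_isUnit_det Λ).mp hΛ.isUnit),
    trace_sub, trace_one]
  exact sub_le_self _ hΛ.inv.posSemidef.trace_nonneg

theorem Matrix.posDef_one_add_sum_vecMulVec_self {ι n : Type*} [Fintype n] [DecidableEq n]
    (s : Finset ι) (φ : ι → n → ℝ) : (1 + ∑ i ∈ s, vecMulVec (φ i) (φ i)).PosDef :=
  PosDef.one.add_posSemidef <| posSemidef_sum s fun i _ => posSemidef_vecMulVec_self_star (φ i)

open Matrix in
theorem sum_quadform_inv_le_dim (d t : ℕ) (φ : Fin t → (Fin d → ℝ))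
    (Λ : Matrix (Fin d) (Fin d) ℝ)
    (hΛ : Λ = 1 + ∑ i : Fin t, vecMulVec (φ i) (φ i)) :
    ∑ i : Fin t, φ i ⬝ᵥ (Λ⁻¹ *ᵥ φ i) ≤ (d : ℝ) := by
  have hpos : Λ.PosDef := hΛ ▸ posDef_one_add_sum_vecMulVec_self _ φ
  calc ∑ i : Fin t, φ i ⬝ᵥ (Λ⁻¹ *ᵥ φ i)
      = (Λ⁻¹ * ∑ i : Fin t, vecMulVec (φ i) (φ i)).trace := by
        simp only [dotProduct_mulVec_eq_trace_mul_vecMulVec, Finset.mul_sum, trace_sum]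
    _ = (Λ⁻¹ * (Λ - 1)).trace := by rw [hΛ, add_sub_cancel_left]
    _ ≤ d := by simpa using hpos.trace_inv_mul_sub_one_le_card
end

section
/- Let {φ_j}_{j=1}^t be vectors in ℝ^d satisfying ‖φ_j‖ ≤ 1 for all j. Let Λ_0 be a positive definite d × d matrix whose smallest eigenvalue satisfies λ_min(Λ_0) ≥ 1, and for j ≥ 1 define Λ_j = Λ_0 + Σ_{i=1}^j φ_i φ_iᵀ. Then log(det(Λ_t) / det(Λ_0)) ≤ Σ_{j=1}^t φ_jᵀ (Λ_{j-1})⁻¹ φ_j ≤ 2 * log(det(Λ_t) / det(Λ_0)). -/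
/-!
By the matrix determinant lemma, `det Λ_{j+1} = det Λ_j * (1 + x_j)` with
`x_j = φ_jᵀ Λ_j⁻¹ φ_j`, so `log (det Λ_t / det Λ_0) = ∑ log (1 + x_j)`. Since `1 ≤ Λ_j` in the
Loewner order and `‖φ_j‖ ≤ 1`, each `x_j` lies in `[0, 1]`, where `x / 2 ≤ log (1 + x) ≤ x`.
-/

open Finset Matrix MatrixOrder
open scoped ComplexOrder

theorem Real.le_two_mul_log_one_add {x : ℝ} (h0 : 0 ≤ x) (h1 : x ≤ 1) :
    x ≤ 2 * Real.log (1 + x) := by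
  have hpos : 0 < 1 + x := by linarith
  calc x ≤ 2 * (x / (1 + x)) := by rw [mul_div_assoc', le_div_iff₀ hpos]; nlinarith
    _ = 2 * (1 - (1 + x)⁻¹) := by field_simp; ring
    _ ≤ 2 * Real.log (1 + x) := by gcongr; exact Real.one_sub_inv_le_log_of_pos hpos

namespace Matrix

section CommRing

variable {m R : Type*} [Fintype m] [DecidableEq m] [CommRing R]

theorem det_add_vecMulVec {A : Matrix m m R} (hA : IsUnit A.det) (u v : m → R) :
    (A + vecMulVec u v).det = A.det * (1 + v ⬝ᵥ (A⁻¹ *ᵥ u)) := by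
  rw [vecMulVec_eq Unit, det_add_replicateCol_mul_replicateRow hA]
  congr 1
  rw [det_unique, add_apply, one_apply_eq, ← replicateRow_vecMul,
    replicateRow_mul_replicateCol_apply, dotProduct_mulVec]

theorem det_eq_det_zero_mul_prod_of_add_vecMulVec {Λ : ℕ → Matrix m m R} {u v : ℕ → m → R}
    (hΛ : ∀ j, Λ (j + 1) = Λ j + vecMulVec (u j) (v j)) (hdet : ∀ j, IsUnit (Λ j).det)
    (t : ℕ) : (Λ t).det = (Λ 0).det * ∏ j ∈ range t, (1 + v j ⬝ᵥ ((Λ j)⁻¹ *ᵥ u j)) := by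
  induction t with
  | zero => simp
  | succ t ih => rw [hΛ t, det_add_vecMulVec (hdet t), ih, prod_range_succ, mul_assoc]

end CommRing

section RCLike

variable {n 𝕜 : Type*} [DecidableEq n] [RCLike 𝕜]

theorem IsHermitian.one_le_of_one_le_eigenvalues [Fintype n] {A : Matrix n n 𝕜}
    (hA : A.IsHermitian) (h : ∀ i, 1 ≤ hA.eigenvalues i) : 1 ≤ A := by
  rw [CFC.one_le_iff (R := ℝ) A hA.isSelfAdjoint, hA.spectrum_real_eq_range_eigenvalues]
  rintro _ ⟨i, rfl⟩
  exact h i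

theorem PosDef.of_one_le {A : Matrix n n 𝕜} (hA : 1 ≤ A) : A.PosDef := by
  simpa using PosDef.one.add_posSemidef hA

end RCLike

/-- With `y = A⁻¹ v`: `y ⬝ y ≤ y ⬝ A y = v ⬝ y`, and then `0 ≤ ‖v - y‖²` gives `v ⬝ y ≤ v ⬝ v`. -/
theorem dotProduct_inv_mulVec_le_dotProduct {n : Type*} [Fintype n] [DecidableEq n]
    {A : Matrix n n ℝ} (hA : 1 ≤ A) (v : n → ℝ) : v ⬝ᵥ (A⁻¹ *ᵥ v) ≤ v ⬝ᵥ v := by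
  set y := A⁻¹ *ᵥ v
  have hAy : A *ᵥ y = v := by
    rw [mulVec_mulVec, mul_nonsing_inv _ (PosDef.of_one_le hA).det_pos.ne'.isUnit, one_mulVec]
  have hyy : y ⬝ᵥ y ≤ v ⬝ᵥ y := by
    have := hA.dotProduct_mulVec_nonneg y
    rwa [sub_mulVec, one_mulVec, hAy, star_trivial, dotProduct_sub, sub_nonneg,
      dotProduct_comm y v] at this
  have hvy : 0 ≤ (v - y) ⬝ᵥ (v - y) := dotProduct_self_star_nonneg _
  simp only [sub_dotProduct, dotProduct_sub, dotProduct_comm y v] at hvy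
  linarith

end Matrix

open Matrix in
theorem elliptical_potential (d t : ℕ) (φ : ℕ → EuclideanSpace ℝ (Fin d))
    (hφ : ∀ j, ‖φ j‖ ≤ 1)
    (Λ0 : Matrix (Fin d) (Fin d) ℝ) (hΛ0 : Λ0.PosDef)
    (hmin : ∀ i, 1 ≤ hΛ0.isHermitian.eigenvalues i)
    (Λ : ℕ → Matrix (Fin d) (Fin d) ℝ)
    (hΛ : ∀ j, Λ j = Λ0 + ∑ i ∈ Finset.range j, vecMulVec (φ i) (φ i)) :
    Real.log ((Λ t).det / Λ0.det) ≤ ∑ j ∈ Finset.range t, φ j ⬝ᵥ ((Λ j)⁻¹ *ᵥ φ j) ∧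
      ∑ j ∈ Finset.range t, φ j ⬝ᵥ ((Λ j)⁻¹ *ᵥ φ j)
        ≤ 2 * Real.log ((Λ t).det / Λ0.det) := by
  set x : ℕ → ℝ := fun j => φ j ⬝ᵥ ((Λ j)⁻¹ *ᵥ φ j)
  have hone : ∀ j, 1 ≤ Λ j := fun j => by
    refine (hΛ0.isHermitian.one_le_of_one_le_eigenvalues hmin).trans ?_
    rw [hΛ j]
    exact le_add_of_nonneg_right <| sum_nonneg fun i _ => by
      simpa using (posSemidef_vecMulVec_self_star (φ i).ofLp).nonneg
  have hPD : ∀ j, (Λ j).PosDef := fun j => PosDef.of_one_le (hone j)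
  have hx0 : ∀ j, 0 ≤ x j := fun j => by
    simpa using (hPD j).inv.posSemidef.dotProduct_mulVec_nonneg (φ j).ofLp
  have hx1 : ∀ j, x j ≤ 1 := fun j =>
    calc x j ≤ φ j ⬝ᵥ φ j := dotProduct_inv_mulVec_le_dotProduct (hone j) _
      _ = ‖φ j‖ ^ 2 := by
        rw [← real_inner_self_eq_norm_sq, EuclideanSpace.inner_eq_star_dotProduct, star_trivial]
      _ ≤ 1 := pow_le_one₀ (norm_nonneg _) (hφ j)
  have hlog : Real.log ((Λ t).det / Λ0.det) = ∑ j ∈ range t, Real.log (1 + x j) := by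
    have hstep : ∀ j, Λ (j + 1) = Λ j + vecMulVec (φ j) (φ j) := fun j => by
      rw [hΛ, hΛ, sum_range_succ, add_assoc]
    rw [det_eq_det_zero_mul_prod_of_add_vecMulVec hstep fun j => (hPD j).det_pos.ne'.isUnit,
      hΛ 0, range_zero, sum_empty, add_zero, mul_div_cancel_left₀ _ hΛ0.det_pos.ne',
      Real.log_prod fun j _ => by linarith [hx0 j]]
  rw [hlog, mul_sum]
  refine ⟨sum_le_sum fun j _ => ?_,
    sum_le_sum fun j _ => Real.le_two_mul_log_one_add (hx0 j) (hx1 j)⟩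
  linarith [Real.log_le_sub_one_of_pos (show 0 < 1 + x j by linarith [hx0 j])]
end

section
/- Let φ, φ_1, …, φ_n be vectors in ℝ^d and let Λ = I + Σ_{i=1}^n φ_i φ_iᵀ, which is positive definite and hence invertible. Then Σ_{i=1}^n |φᵀ Λ⁻¹ φ_i| ≤ sqrt(d * n) * sqrt(φᵀ Λ⁻¹ φ). -/
/-!
Since `Λ⁻¹` is positive definite, Cauchy–Schwarz for the form it defines bounds each term by
`‖φ‖_{Λ⁻¹} ‖φ_i‖_{Λ⁻¹}`, and Cauchy–Schwarz in `ℝⁿ` bounds `∑ ‖φ_i‖_{Λ⁻¹}` by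
`√n (∑ φ_iᵀ Λ⁻¹ φ_i)^{1/2}`. That last sum is `tr (Λ⁻¹ (Λ - I)) = d - tr Λ⁻¹ ≤ d`.
-/

open Matrix Finset

namespace Matrix

variable {m ι : Type*} [Fintype m] [Fintype ι]

theorem PosSemidef.abs_dotProduct_mulVec_le {M : Matrix m m ℝ} (hM : M.PosSemidef)
    (x y : m → ℝ) :
    |x ⬝ᵥ (M *ᵥ y)| ≤ √(x ⬝ᵥ (M *ᵥ x)) * √(y ⬝ᵥ (M *ᵥ y)) := by
  classical
  have hsymm : y ⬝ᵥ (M *ᵥ x) = x ⬝ᵥ (M *ᵥ y) := by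
    rw [dotProduct_mulVec, ← mulVec_transpose, ← conjTranspose_eq_transpose_of_trivial,
      hM.isHermitian.eq, dotProduct_comm]
  have hcs := LinearMap.BilinForm.apply_mul_apply_le_of_forall_zero_le (toLinearMap₂' ℝ M)
    (fun v => by simpa [toLinearMap₂'_apply'] using hM.dotProduct_mulVec_nonneg v) x y
  simp only [toLinearMap₂'_apply', hsymm] at hcs
  rw [← Real.sqrt_mul (by simpa using hM.dotProduct_mulVec_nonneg x)]
  exact Real.abs_le_sqrt (by rwa [sq])

theorem posDef_one_add_sum_vecMulVec [DecidableEq m] (ψ : ι → m → ℝ) :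
    (1 + ∑ i, vecMulVec (ψ i) (ψ i)).PosDef :=
  PosDef.one.add_posSemidef <| posSemidef_sum _ fun i _ => posSemidef_vecMulVec_self_star (ψ i)

theorem sum_dotProduct_inv_mulVec_self {R : Type*} [CommRing R] [DecidableEq m]
    (ψ : ι → m → R) {Λ : Matrix m m R} (hΛ : Λ = 1 + ∑ i, vecMulVec (ψ i) (ψ i))
    (hdet : IsUnit Λ.det) :
    ∑ i, ψ i ⬝ᵥ (Λ⁻¹ *ᵥ ψ i) = Fintype.card m - Λ⁻¹.trace := by
  have hS : ∑ i, vecMulVec (ψ i) (ψ i) = Λ - 1 := by rw [hΛ, add_sub_cancel_left]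
  calc ∑ i, ψ i ⬝ᵥ (Λ⁻¹ *ᵥ ψ i)
      = ∑ i, (Λ⁻¹ * vecMulVec (ψ i) (ψ i)).trace := by
        simp only [mul_vecMulVec, trace_vecMulVec, dotProduct_comm]
    _ = (Λ⁻¹ * (Λ - 1)).trace := by rw [← hS, mul_sum, trace_sum]
    _ = Fintype.card m - Λ⁻¹.trace := by
        rw [mul_sub, nonsing_inv_mul Λ hdet, mul_one, trace_sub, trace_one]

theorem sum_dotProduct_inv_mulVec_self_le [DecidableEq m]
    (ψ : ι → m → ℝ) {Λ : Matrix m m ℝ} (hΛ : Λ = 1 + ∑ i, vecMulVec (ψ i) (ψ i)) :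
    ∑ i, ψ i ⬝ᵥ (Λ⁻¹ *ᵥ ψ i) ≤ Fintype.card m := by
  have hpos : Λ.PosDef := hΛ ▸ posDef_one_add_sum_vecMulVec ψ
  rw [sum_dotProduct_inv_mulVec_self ψ hΛ ((isUnit_iff_isUnit_det Λ).mp hpos.isUnit)]
  linarith [hpos.inv.posSemidef.trace_nonneg]

end Matrix

theorem Real.sum_sqrt_le_sqrt_card_mul_sqrt_sum {ι : Type*} (s : Finset ι) {f : ι → ℝ}
    (hf : ∀ i, 0 ≤ f i) :
    ∑ i ∈ s, √(f i) ≤ √(#s) * √(∑ i ∈ s, f i) := by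
  simpa using Real.sum_sqrt_mul_sqrt_le s (fun _ => zero_le_one) hf

open Matrix in
theorem sum_abs_inner_inv_le (d n : ℕ) (φ : Fin d → ℝ) (ψ : Fin n → (Fin d → ℝ))
    (Λ : Matrix (Fin d) (Fin d) ℝ)
    (hΛ : Λ = 1 + ∑ i : Fin n, vecMulVec (ψ i) (ψ i)) :
    ∑ i : Fin n, |φ ⬝ᵥ (Λ⁻¹ *ᵥ ψ i)|
      ≤ Real.sqrt ((d : ℝ) * n) * Real.sqrt (φ ⬝ᵥ (Λ⁻¹ *ᵥ φ)) := by
  have hM : Λ⁻¹.PosSemidef := (hΛ ▸ posDef_one_add_sum_vecMulVec ψ).inv.posSemidef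
  have hnonneg i : 0 ≤ ψ i ⬝ᵥ (Λ⁻¹ *ᵥ ψ i) := by simpa using hM.dotProduct_mulVec_nonneg (ψ i)
  calc ∑ i, |φ ⬝ᵥ (Λ⁻¹ *ᵥ ψ i)|
      ≤ ∑ i, √(φ ⬝ᵥ (Λ⁻¹ *ᵥ φ)) * √(ψ i ⬝ᵥ (Λ⁻¹ *ᵥ ψ i)) :=
        sum_le_sum fun i _ => hM.abs_dotProduct_mulVec_le φ (ψ i)
    _ = √(φ ⬝ᵥ (Λ⁻¹ *ᵥ φ)) * ∑ i, √(ψ i ⬝ᵥ (Λ⁻¹ *ᵥ ψ i)) := by rw [mul_sum]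
    _ ≤ √(φ ⬝ᵥ (Λ⁻¹ *ᵥ φ)) * (√n * √d) := by
        gcongr
        calc ∑ i, √(ψ i ⬝ᵥ (Λ⁻¹ *ᵥ ψ i))
            ≤ √n * √(∑ i, ψ i ⬝ᵥ (Λ⁻¹ *ᵥ ψ i)) := by
              simpa using Real.sum_sqrt_le_sqrt_card_mul_sqrt_sum univ hnonneg
          _ ≤ √n * √d := by
              gcongr
              simpa using sum_dotProduct_inv_mulVec_self_le ψ hΛ
    _ = √(d * n) * √(φ ⬝ᵥ (Λ⁻¹ *ᵥ φ)) := by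
        rw [Real.sqrt_mul (Nat.cast_nonneg d)]
        ring
end
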